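/- arXiv:1602.05761 — 2 statements merged into one kernel-verified Lean document; each statement's English description precedes it below -/
import Mathlib

section
/- Fix a continuous function u : [0,T] → ℝ^{d−r} and assume g : ℝ^d → ℝ^{d×p} is continuous. Let m̂₀ : [0,T] → ℝ^r be continuous such that, with m̂ = m̂₀, the matrices B̂ and T·I_d − Â B̂⁻¹ Âᵀ are invertible. Then the map m̂ ↦ ∫₀^T ‖x̂(t) − ξ̂ − Ĝ(t)θ̂‖²dt, defined on continuous m̂ : [0,T] → ℝ^r for which the required inverses exist, is continuous at m̂₀ with respect to the supremum norm ‖·‖∞. -/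
open MeasureTheory Filter
open scoped Matrix

attribute [local instance] Matrix.frobeniusSeminormedAddCommGroup
  Matrix.frobeniusNormedAddCommGroup Matrix.frobeniusNormedSpace

noncomputable section

namespace ODEC

/-- sup over `[0,T]` of the norm of `f`. -/
def supN {E : Type*} [SeminormedAddCommGroup E] (T : ℝ) (f : ℝ → E) : ℝ :=
  ⨆ t : Set.Icc (0:ℝ) T, ‖f t‖

/-- extension of a continuous function on `[0,T]` to `ℝ`. -/
def ext {T : ℝ} (hT : 0 ≤ T) {E : Type*} [TopologicalSpace E]
    (f : C(Set.Icc (0:ℝ) T, E)) : ℝ → E :=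
  fun t => f (Set.projIcc 0 T hT t)

/-- combining measured and unmeasured components into one vector function -/
def pair {r q : ℕ} (m : ℝ → EuclideanSpace ℝ (Fin r)) (u : ℝ → EuclideanSpace ℝ (Fin q)) :
    ℝ → EuclideanSpace ℝ (Fin (r + q)) :=
  fun t => (EuclideanSpace.equiv (Fin (r + q)) ℝ).symm
    (Fin.append (EuclideanSpace.equiv (Fin r) ℝ (m t)) (EuclideanSpace.equiv (Fin q) ℝ (u t)))

def measPart {r q : ℕ} (x : ℝ → EuclideanSpace ℝ (Fin (r + q))) : ℝ → EuclideanSpace ℝ (Fin r) :=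
  fun t => (EuclideanSpace.equiv (Fin r) ℝ).symm fun i => x t (Fin.castAdd q i)

def unmeasPart {r q : ℕ} (x : ℝ → EuclideanSpace ℝ (Fin (r + q))) : ℝ → EuclideanSpace ℝ (Fin q) :=
  fun t => (EuclideanSpace.equiv (Fin q) ℝ).symm fun i => x t (Fin.natAdd r i)

/-- matrix-vector multiplication between Euclidean spaces -/
def mv {a b : ℕ} (A : Matrix (Fin a) (Fin b) ℝ) (v : EuclideanSpace ℝ (Fin b)) :
    EuclideanSpace ℝ (Fin a) :=
  Matrix.toEuclideanLin A v

variable {n p : ℕ}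

def Gm (g : EuclideanSpace ℝ (Fin n) → Matrix (Fin n) (Fin p) ℝ)
    (x : ℝ → EuclideanSpace ℝ (Fin n)) (t : ℝ) : Matrix (Fin n) (Fin p) ℝ :=
  ∫ s in (0:ℝ)..t, g (x s)

def Am (g : EuclideanSpace ℝ (Fin n) → Matrix (Fin n) (Fin p) ℝ)
    (x : ℝ → EuclideanSpace ℝ (Fin n)) (T : ℝ) : Matrix (Fin n) (Fin p) ℝ :=
  ∫ t in (0:ℝ)..T, Gm g x t

def Bm (g : EuclideanSpace ℝ (Fin n) → Matrix (Fin n) (Fin p) ℝ)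
    (x : ℝ → EuclideanSpace ℝ (Fin n)) (T : ℝ) : Matrix (Fin p) (Fin p) ℝ :=
  ∫ t in (0:ℝ)..T, (Gm g x t)ᵀ * Gm g x t

/-- the matrix `T·I_d − A B⁻¹ Aᵀ`. -/
def Cm (g : EuclideanSpace ℝ (Fin n) → Matrix (Fin n) (Fin p) ℝ)
    (x : ℝ → EuclideanSpace ℝ (Fin n)) (T : ℝ) : Matrix (Fin n) (Fin n) ℝ :=
  T • (1 : Matrix (Fin n) (Fin n) ℝ) - Am g x T * (Bm g x T)⁻¹ * (Am g x T)ᵀ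

def xiv (g : EuclideanSpace ℝ (Fin n) → Matrix (Fin n) (Fin p) ℝ)
    (x : ℝ → EuclideanSpace ℝ (Fin n)) (T : ℝ) : EuclideanSpace ℝ (Fin n) :=
  mv (Cm g x T)⁻¹
    (∫ t in (0:ℝ)..T, mv (1 - Am g x T * (Bm g x T)⁻¹ * (Gm g x t)ᵀ) (x t))

def thv (g : EuclideanSpace ℝ (Fin n) → Matrix (Fin n) (Fin p) ℝ)
    (x : ℝ → EuclideanSpace ℝ (Fin n)) (T : ℝ) : EuclideanSpace ℝ (Fin p) :=
  mv (Bm g x T)⁻¹ (∫ t in (0:ℝ)..T, mv (Gm g x t)ᵀ (x t - xiv g x T))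

def Mf (g : EuclideanSpace ℝ (Fin n) → Matrix (Fin n) (Fin p) ℝ)
    (x : ℝ → EuclideanSpace ℝ (Fin n)) (T : ℝ) : ℝ :=
  ∫ t in (0:ℝ)..T, ‖x t - xiv g x T - mv (Gm g x t) (thv g x T)‖ ^ 2

/-- `x` solves the integral equation `x(t) = ξ + (∫₀ᵗ g(x(s)) ds)·θ` on `[0,T]`. -/
def IsSol (g : EuclideanSpace ℝ (Fin n) → Matrix (Fin n) (Fin p) ℝ) (T : ℝ)
    (θ : EuclideanSpace ℝ (Fin p)) (ξ : EuclideanSpace ℝ (Fin n))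
    (x : ℝ → EuclideanSpace ℝ (Fin n)) : Prop :=
  ContinuousOn x (Set.Icc 0 T) ∧ ∀ t ∈ Set.Icc (0:ℝ) T, x t = ξ + mv (Gm g x t) θ

end ODEC

/-! Every quantity entering the criterion is obtained from `x̂` by continuous pointwise
operations (products, transposes, evaluation of `g`), by integration over `[0,T]` or `[0,t]`,
and by inverting `B̂` and `T·I − ÂB̂⁻¹Âᵀ`. A uniformly small perturbation of `m̂` moves `x̂`
pointwise with a uniform bound. This mode of convergence survives continuous pointwise
operations, since continuous maps of finite-dimensional spaces are bounded on balls, and it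
passes through integrals by dominated convergence; matrix inversion is continuous at
invertible matrices. -/

open scoped Topology
open Set

/-- The mode of convergence to which dominated convergence on a bounded interval applies. -/
structure TendstoBoundedOn {ι α E : Type*} [TopologicalSpace α] [NormedAddCommGroup E]
    (l : Filter ι) (s : Set α) (f : ι → α → E) (f₀ : α → E) : Prop where
  continuous : ∀ i, Continuous (f i)
  tendsto : ∀ t ∈ s, Tendsto (fun i => f i t) l (𝓝 (f₀ t))
  bounded : ∃ C, ∀ᶠ i in l, ∀ t ∈ s, ‖f i t‖ ≤ C

namespace TendstoBoundedOn

variable {ι α E F G : Type*} [TopologicalSpace α]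
  [NormedAddCommGroup E] [NormedAddCommGroup F] [NormedAddCommGroup G]
  {l : Filter ι} {s : Set α} {f : ι → α → E} {f₀ : α → E}

theorem mono {s' : Set α} (hf : TendstoBoundedOn l s f f₀) (hs : s' ⊆ s) :
    TendstoBoundedOn l s' f f₀ where
  continuous := hf.continuous
  tendsto t ht := hf.tendsto t (hs ht)
  bounded :=
    let ⟨C, hC⟩ := hf.bounded
    ⟨C, hC.mono fun _ h t ht => h t (hs ht)⟩

theorem of_continuous (hf₀ : Continuous f₀) (hs : IsCompact s) :
    TendstoBoundedOn l s (fun _ => f₀) f₀ where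
  continuous _ := hf₀
  tendsto _ _ := tendsto_const_nhds
  bounded :=
    let ⟨C, hC⟩ := hs.exists_bound_of_continuousOn hf₀.continuousOn
    ⟨C, .of_forall fun _ => hC⟩

theorem of_tendsto {c : ι → E} {c₀ : E} (hc : Tendsto c l (𝓝 c₀)) :
    TendstoBoundedOn l s (fun i _ => c i) (fun _ => c₀) where
  continuous _ := continuous_const
  tendsto _ _ := hc
  bounded := ⟨‖c₀‖ + 1,
    (hc.norm.eventually (gt_mem_nhds (lt_add_one _))).mono fun _ h _ _ => h.le⟩

theorem prodMk {g : ι → α → F} {g₀ : α → F} (hf : TendstoBoundedOn l s f f₀)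
    (hg : TendstoBoundedOn l s g g₀) :
    TendstoBoundedOn l s (fun i t => (f i t, g i t)) (fun t => (f₀ t, g₀ t)) where
  continuous i := (hf.continuous i).prodMk (hg.continuous i)
  tendsto t ht := (hf.tendsto t ht).prodMk_nhds (hg.tendsto t ht)
  bounded := by
    obtain ⟨C, hC⟩ := hf.bounded
    obtain ⟨D, hD⟩ := hg.bounded
    refine ⟨max C D, (hC.and hD).mono fun i h t ht => ?_⟩
    rw [Prod.norm_mk]
    exact max_le_max (h.1 t ht) (h.2 t ht)

theorem sub {g : ι → α → E} {g₀ : α → E} (hf : TendstoBoundedOn l s f f₀)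
    (hg : TendstoBoundedOn l s g g₀) :
    TendstoBoundedOn l s (fun i t => f i t - g i t) (fun t => f₀ t - g₀ t) where
  continuous i := (hf.continuous i).sub (hg.continuous i)
  tendsto t ht := (hf.tendsto t ht).sub (hg.tendsto t ht)
  bounded := by
    obtain ⟨C, hC⟩ := hf.bounded
    obtain ⟨D, hD⟩ := hg.bounded
    exact ⟨C + D, (hC.and hD).mono fun i h t ht =>
      (norm_sub_le _ _).trans (add_le_add (h.1 t ht) (h.2 t ht))⟩

theorem comp [ProperSpace E] {φ : E → F} (hφ : Continuous φ) (hf : TendstoBoundedOn l s f f₀) :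
    TendstoBoundedOn l s (fun i t => φ (f i t)) (fun t => φ (f₀ t)) where
  continuous i := hφ.comp (hf.continuous i)
  tendsto t ht := (hφ.tendsto _).comp (hf.tendsto t ht)
  bounded := by
    obtain ⟨C, hC⟩ := hf.bounded
    obtain ⟨D, hD⟩ := (isCompact_closedBall (0 : E) C).exists_bound_of_continuousOn
      hφ.continuousOn
    exact ⟨D, hC.mono fun i h t ht => hD _ (mem_closedBall_zero_iff.mpr (h t ht))⟩

theorem comp₂ [ProperSpace E] [ProperSpace F] {φ : E → F → G}
    (hφ : Continuous fun p : E × F => φ p.1 p.2)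
    {g : ι → α → F} {g₀ : α → F} (hf : TendstoBoundedOn l s f f₀)
    (hg : TendstoBoundedOn l s g g₀) :
    TendstoBoundedOn l s (fun i t => φ (f i t) (g i t)) (fun t => φ (f₀ t) (g₀ t)) :=
  (hf.prodMk hg).comp hφ

end TendstoBoundedOn

namespace TendstoBoundedOn

variable {ι E : Type*} [NormedAddCommGroup E] [NormedSpace ℝ E] {l : Filter ι}
  [l.IsCountablyGenerated] {f : ι → ℝ → E} {f₀ : ℝ → E} {a b : ℝ}

theorem tendsto_intervalIntegral (hf : TendstoBoundedOn l (uIcc a b) f f₀) :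
    Tendsto (fun i => ∫ t in a..b, f i t) l (𝓝 (∫ t in a..b, f₀ t)) := by
  obtain ⟨C, hC⟩ := hf.bounded
  refine intervalIntegral.tendsto_integral_filter_of_dominated_convergence (fun _ => C)
    (.of_forall fun i => (hf.continuous i).aestronglyMeasurable) ?_ intervalIntegrable_const
    (.of_forall fun t ht => hf.tendsto t (uIoc_subset_uIcc ht))
  exact hC.mono fun i h => .of_forall fun t ht => h t (uIoc_subset_uIcc ht)

theorem primitive (hf : TendstoBoundedOn l (uIcc a b) f f₀) :
    TendstoBoundedOn l (uIcc a b) (fun i t => ∫ s in a..t, f i s)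
      (fun t => ∫ s in a..t, f₀ s) where
  continuous i := intervalIntegral.continuous_primitive
    (fun _ _ => (hf.continuous i).intervalIntegrable _ _) a
  tendsto t ht := (hf.mono (uIcc_subset_uIcc_left ht)).tendsto_intervalIntegral
  bounded := by
    obtain ⟨C, hC⟩ := hf.bounded
    refine ⟨max C 0 * |b - a|, hC.mono fun i h t ht => ?_⟩
    calc ‖∫ s in a..t, f i s‖ ≤ max C 0 * |t - a| :=
          intervalIntegral.norm_integral_le_of_norm_le_const fun s hs =>
            (h s (uIcc_subset_uIcc_left ht (uIoc_subset_uIcc hs))).trans (le_max_left _ _)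
      _ ≤ max C 0 * |b - a| :=
          mul_le_mul_of_nonneg_left (abs_sub_left_of_mem_uIcc ht) (le_max_right _ _)

end TendstoBoundedOn

namespace ODEC

theorem mv_apply {a b : ℕ} (M : Matrix (Fin a) (Fin b) ℝ) (v : EuclideanSpace ℝ (Fin b)) :
    mv M v = WithLp.toLp 2 (M *ᵥ v.ofLp) := rfl

theorem continuous_mv {a b : ℕ} :
    Continuous fun p : Matrix (Fin a) (Fin b) ℝ × EuclideanSpace ℝ (Fin b) => mv p.1 p.2 := by
  simp only [mv_apply]
  fun_prop

theorem continuous_pair {r q : ℕ} :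
    Continuous fun p : EuclideanSpace ℝ (Fin r) × EuclideanSpace ℝ (Fin q) =>
      pair (fun _ => p.1) (fun _ => p.2) 0 := by
  have := (Fin.appendHomeomorph (X := ℝ) r q).continuous
  unfold pair
  fun_prop

theorem continuous_ext {T : ℝ} (hT : 0 ≤ T) {E : Type*} [TopologicalSpace E]
    (f : C(Icc (0:ℝ) T, E)) : Continuous (ext hT f) :=
  f.continuous.comp continuous_projIcc

end ODEC

open ODEC

theorem Filter.Tendsto.mv {ι : Type*} {l : Filter ι} {a b : ℕ} {M : ι → Matrix (Fin a) (Fin b) ℝ}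
    {v : ι → EuclideanSpace ℝ (Fin b)} {M₀ : Matrix (Fin a) (Fin b) ℝ}
    {v₀ : EuclideanSpace ℝ (Fin b)} (hM : Tendsto M l (𝓝 M₀)) (hv : Tendsto v l (𝓝 v₀)) :
    Tendsto (fun i => mv (M i) (v i)) l (𝓝 (mv M₀ v₀)) :=
  Tendsto.comp (f := fun i => (M i, v i)) (continuous_mv.tendsto (M₀, v₀)) (hM.prodMk_nhds hv)

theorem Filter.Tendsto.matrix_inv {ι n R : Type*} [Fintype n] [DecidableEq n] [Field R]
    [TopologicalSpace R] [IsTopologicalRing R] [ContinuousInv₀ R] {l : Filter ι}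
    {A : ι → Matrix n n R} {A₀ : Matrix n n R} (hA : Tendsto A l (𝓝 A₀)) (hA₀ : IsUnit A₀) :
    Tendsto (fun i => (A i)⁻¹) l (𝓝 A₀⁻¹) := by
  refine (continuousAt_matrix_inv A₀ ?_).tendsto.comp hA
  rw [Ring.inverse_eq_inv']
  exact continuousAt_inv₀ ((Matrix.isUnit_iff_isUnit_det A₀).mp hA₀).ne_zero

namespace TendstoBoundedOn

variable {ι α : Type*} [TopologicalSpace α] {l : Filter ι} {s : Set α} {a b c : ℕ}

theorem transpose {f : ι → α → Matrix (Fin a) (Fin b) ℝ} {f₀ : α → Matrix (Fin a) (Fin b) ℝ}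
    (hf : TendstoBoundedOn l s f f₀) :
    TendstoBoundedOn l s (fun i t => (f i t)ᵀ) (fun t => (f₀ t)ᵀ) :=
  hf.comp (φ := Matrix.transpose) continuous_id.matrix_transpose

theorem matrix_mul {f : ι → α → Matrix (Fin a) (Fin b) ℝ} {f₀ : α → Matrix (Fin a) (Fin b) ℝ}
    {g : ι → α → Matrix (Fin b) (Fin c) ℝ} {g₀ : α → Matrix (Fin b) (Fin c) ℝ}
    (hf : TendstoBoundedOn l s f f₀) (hg : TendstoBoundedOn l s g g₀) :
    TendstoBoundedOn l s (fun i t => f i t * g i t) (fun t => f₀ t * g₀ t) :=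
  hf.comp₂ (φ := fun (x : Matrix (Fin a) (Fin b) ℝ) (y : Matrix (Fin b) (Fin c) ℝ) => x * y)
    (continuous_fst.matrix_mul continuous_snd) hg

theorem mv {f : ι → α → Matrix (Fin a) (Fin b) ℝ} {f₀ : α → Matrix (Fin a) (Fin b) ℝ}
    {v : ι → α → EuclideanSpace ℝ (Fin b)} {v₀ : α → EuclideanSpace ℝ (Fin b)}
    (hf : TendstoBoundedOn l s f f₀) (hv : TendstoBoundedOn l s v v₀) :
    TendstoBoundedOn l s (fun i t => ODEC.mv (f i t) (v i t)) (fun t => ODEC.mv (f₀ t) (v₀ t)) :=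
  hf.comp₂ (φ := ODEC.mv) continuous_mv hv

theorem pair {r q : ℕ} {m : ι → ℝ → EuclideanSpace ℝ (Fin r)} {m₀ : ℝ → EuclideanSpace ℝ (Fin r)}
    {u : ι → ℝ → EuclideanSpace ℝ (Fin q)} {u₀ : ℝ → EuclideanSpace ℝ (Fin q)} {s : Set ℝ}
    (hm : TendstoBoundedOn l s m m₀) (hu : TendstoBoundedOn l s u u₀) :
    TendstoBoundedOn l s (fun i => ODEC.pair (m i) (u i)) (ODEC.pair m₀ u₀) :=
  -- `pair m u t` depends only on `m t` and `u t`
  hm.comp₂ (φ := fun v w => ODEC.pair (fun _ => v) (fun _ => w) 0) continuous_pair hu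

theorem ext {T : ℝ} (hT : 0 ≤ T) {E : Type*} [NormedAddCommGroup E] (m₀ : C(Icc (0:ℝ) T, E))
    {s : Set ℝ} : TendstoBoundedOn (𝓝 m₀) s (fun m => ODEC.ext hT m) (ODEC.ext hT m₀) where
  continuous m := continuous_ext hT m
  tendsto _ _ := (continuous_eval_const _).tendsto m₀
  bounded := ⟨‖m₀‖ + 1,
    ((continuous_norm.tendsto m₀).eventually (gt_mem_nhds (lt_add_one _))).mono
      fun m h _ _ => (m.norm_coe_le_norm _).trans h.le⟩

end TendstoBoundedOn

namespace ODEC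

variable {ι : Type*} {l : Filter ι} [l.IsCountablyGenerated] {n p : ℕ}
  {g : EuclideanSpace ℝ (Fin n) → Matrix (Fin n) (Fin p) ℝ}
  {X : ι → ℝ → EuclideanSpace ℝ (Fin n)} {x₀ : ℝ → EuclideanSpace ℝ (Fin n)} {T : ℝ}

theorem tendstoBoundedOn_Gm (hg : Continuous g) (hX : TendstoBoundedOn l (uIcc 0 T) X x₀) :
    TendstoBoundedOn l (uIcc 0 T) (fun i => Gm g (X i)) (Gm g x₀) :=
  (hX.comp hg).primitive

theorem tendsto_Am (hg : Continuous g) (hX : TendstoBoundedOn l (uIcc 0 T) X x₀) :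
    Tendsto (fun i => Am g (X i) T) l (𝓝 (Am g x₀ T)) :=
  (tendstoBoundedOn_Gm hg hX).tendsto_intervalIntegral

theorem tendsto_Bm (hg : Continuous g) (hX : TendstoBoundedOn l (uIcc 0 T) X x₀) :
    Tendsto (fun i => Bm g (X i) T) l (𝓝 (Bm g x₀ T)) := by
  have hG := tendstoBoundedOn_Gm hg hX
  exact (hG.transpose.matrix_mul hG).tendsto_intervalIntegral

theorem tendsto_Cm (hg : Continuous g) (hX : TendstoBoundedOn l (uIcc 0 T) X x₀)
    (hB : IsUnit (Bm g x₀ T)) :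
    Tendsto (fun i => Cm g (X i) T) l (𝓝 (Cm g x₀ T)) := by
  have hcont : Continuous fun M : Matrix (Fin n) (Fin p) ℝ × Matrix (Fin p) (Fin p) ℝ =>
      T • (1 : Matrix (Fin n) (Fin n) ℝ) - M.1 * M.2 * M.1ᵀ := by
    fun_prop
  exact Tendsto.comp (f := fun i => (Am g (X i) T, (Bm g (X i) T)⁻¹))
    (hcont.tendsto (Am g x₀ T, (Bm g x₀ T)⁻¹))
    ((tendsto_Am hg hX).prodMk_nhds ((tendsto_Bm hg hX).matrix_inv hB))

theorem tendsto_xiv (hg : Continuous g) (hX : TendstoBoundedOn l (uIcc 0 T) X x₀)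
    (hB : IsUnit (Bm g x₀ T)) (hC : IsUnit (Cm g x₀ T)) :
    Tendsto (fun i => xiv g (X i) T) l (𝓝 (xiv g x₀ T)) := by
  have hA := TendstoBoundedOn.of_tendsto (s := uIcc 0 T) (tendsto_Am hg hX)
  have hBinv := TendstoBoundedOn.of_tendsto (s := uIcc 0 T) ((tendsto_Bm hg hX).matrix_inv hB)
  have hI := ((TendstoBoundedOn.of_tendsto (tendsto_const_nhds (x := (1 : Matrix _ _ ℝ)))).sub
    ((hA.matrix_mul hBinv).matrix_mul (tendstoBoundedOn_Gm hg hX).transpose)).mv hX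
  exact ((tendsto_Cm hg hX hB).matrix_inv hC).mv hI.tendsto_intervalIntegral

theorem tendsto_thv (hg : Continuous g) (hX : TendstoBoundedOn l (uIcc 0 T) X x₀)
    (hB : IsUnit (Bm g x₀ T)) (hC : IsUnit (Cm g x₀ T)) :
    Tendsto (fun i => thv g (X i) T) l (𝓝 (thv g x₀ T)) := by
  have hξ := TendstoBoundedOn.of_tendsto (s := uIcc 0 T) (tendsto_xiv hg hX hB hC)
  exact ((tendsto_Bm hg hX).matrix_inv hB).mv
    ((tendstoBoundedOn_Gm hg hX).transpose.mv (hX.sub hξ)).tendsto_intervalIntegral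

theorem tendsto_Mf (hg : Continuous g) (hX : TendstoBoundedOn l (uIcc 0 T) X x₀)
    (hB : IsUnit (Bm g x₀ T)) (hC : IsUnit (Cm g x₀ T)) :
    Tendsto (fun i => Mf g (X i) T) l (𝓝 (Mf g x₀ T)) := by
  have hξ := TendstoBoundedOn.of_tendsto (s := uIcc 0 T) (tendsto_xiv hg hX hB hC)
  have hθ := TendstoBoundedOn.of_tendsto (s := uIcc 0 T) (tendsto_thv hg hX hB hC)
  have hres := (hX.sub hξ).sub ((tendstoBoundedOn_Gm hg hX).mv hθ)
  exact (hres.comp (φ := fun v => ‖v‖ ^ 2) (by fun_prop)).tendsto_intervalIntegral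

end ODEC

theorem stmt9_general {r q p : ℕ} {T : ℝ} (hT : 0 < T)
    (g : EuclideanSpace ℝ (Fin (r + q)) → Matrix (Fin (r + q)) (Fin p) ℝ)
    (hg : Continuous g)
    (u : C(Set.Icc (0:ℝ) T, EuclideanSpace ℝ (Fin q)))
    (mhat₀ : C(Set.Icc (0:ℝ) T, EuclideanSpace ℝ (Fin r)))
    (hinv₀ : IsUnit (Bm g (pair (ext hT.le mhat₀) (ext hT.le u)) T) ∧
      IsUnit (Cm g (pair (ext hT.le mhat₀) (ext hT.le u)) T)) :
    ∀ ε > (0:ℝ), ∃ δ > (0:ℝ),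
      ∀ mhat : C(Set.Icc (0:ℝ) T, EuclideanSpace ℝ (Fin r)), dist mhat mhat₀ < δ →
        IsUnit (Bm g (pair (ext hT.le mhat) (ext hT.le u)) T) →
        IsUnit (Cm g (pair (ext hT.le mhat) (ext hT.le u)) T) →
        |Mf g (pair (ext hT.le mhat) (ext hT.le u)) T
          - Mf g (pair (ext hT.le mhat₀) (ext hT.le u)) T| < ε := by
  have hX : TendstoBoundedOn (𝓝 mhat₀) (uIcc 0 T) (fun m => pair (ext hT.le m) (ext hT.le u))
      (pair (ext hT.le mhat₀) (ext hT.le u)) :=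
    (TendstoBoundedOn.ext hT.le mhat₀).pair
      (.of_continuous (continuous_ext hT.le u) isCompact_uIcc)
  intro ε hε
  obtain ⟨δ, hδ, hball⟩ :=
    Metric.tendsto_nhds_nhds.mp (tendsto_Mf hg hX hinv₀.1 hinv₀.2) ε hε
  exact ⟨δ, hδ, fun mhat hm _ _ => hball hm⟩

/-- For a fixed continuous `u`, the criterion value
`m̂ ↦ ∫₀ᵀ ‖x̂(t) − ξ̂ − Ĝ(t)θ̂‖² dt`, defined for those continuous `m̂` for which the needed
matrix inverses exist, is continuous at `m̂₀` with respect to the sup norm. -/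
theorem stmt9 {r q p : ℕ} (hr : 0 < r) (hq : 0 < q) (hp : 0 < p) {T : ℝ} (hT : 0 < T)
    (g : EuclideanSpace ℝ (Fin (r + q)) → Matrix (Fin (r + q)) (Fin p) ℝ)
    (hg : Continuous g)
    (u : C(Set.Icc (0:ℝ) T, EuclideanSpace ℝ (Fin q)))
    (mhat₀ : C(Set.Icc (0:ℝ) T, EuclideanSpace ℝ (Fin r)))
    (hinv₀ : IsUnit (Bm g (pair (ext hT.le mhat₀) (ext hT.le u)) T) ∧
      IsUnit (Cm g (pair (ext hT.le mhat₀) (ext hT.le u)) T)) :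
    ∀ ε > (0:ℝ), ∃ δ > (0:ℝ),
      ∀ mhat : C(Set.Icc (0:ℝ) T, EuclideanSpace ℝ (Fin r)), dist mhat mhat₀ < δ →
        IsUnit (Bm g (pair (ext hT.le mhat) (ext hT.le u)) T) →
        IsUnit (Cm g (pair (ext hT.le mhat) (ext hT.le u)) T) →
        |Mf g (pair (ext hT.le mhat) (ext hT.le u)) T
          - Mf g (pair (ext hT.le mhat₀) (ext hT.le u)) T| < ε :=
  stmt9_general hT g hg u mhat₀ hinv₀
end
end

section
/- Assume: (a) g : ℝ^d → ℝ^{d×p} is continuous; (b) for every (θ',ξ') ∈ ℝ^p × ℝ^d there is at most one continuous solution on [0,T] of the integral equation x(t) = ξ' + (∫₀^t g(x(s))ds)·θ', and for the true pair (θ,ξ) the solution x(·) exists with measured part m and unmeasured part u*; (c) identifiability: if the measured parts of two solutions x(·;θ',ξ') and x(·;θ'',ξ'') coincide on [0,T] then (θ',ξ')=(θ'',ξ''); (d) U ⊂ C([0,T],ℝ^{d−r}) is compact under ‖·‖∞ with u* ∈ U, and for each u ∈ U the matrices B_u and T·I_d − A_u B_u⁻¹ A_uᵀ are invertible. Then M(u*)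 = 0, u* is the unique minimizer of M on U, and for every ε > 0, M(u*) < inf { M(u) : u ∈ U, ‖u − u*‖∞ ≥ ε }. -/
open MeasureTheory Filter
open scoped Matrix

attribute [local instance] Matrix.frobeniusSeminormedAddCommGroup
  Matrix.frobeniusNormedAddCommGroup Matrix.frobeniusNormedSpace

noncomputable section

/-!
Along the true trajectory `(m, u*)` the integral equation holds exactly, so the normal equations
defining `ξ_u, θ_u` are solved by `(ξ, θ)` and, the matrices being invertible, return it:
`M(u*) = 0`.
Conversely `M(u) = 0` with a continuous integrand means that `(m, u)` solves the integral equation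
with parameters `(θ_u, ξ_u)` on `[0,T]`; identifiability forces `(θ_u, ξ_u) = (θ, ξ)` and uniqueness
of solutions then forces `u = u*`. Finally `M` is continuous on `U` (matrix inversion is continuous
on invertible matrices), so on the compact set `{u ∈ U | ε ≤ ‖u - u*‖∞}` it attains a minimum,
which is positive.
-/

namespace ODEC

open Set Function intervalIntegral

section MatVec

variable {a b c : ℕ}

theorem mv_add (A : Matrix (Fin a) (Fin b) ℝ) (v w : EuclideanSpace ℝ (Fin b)) :
    mv A (v + w) = mv A v + mv A w :=
  map_add _ v w

theorem mv_sub (A : Matrix (Fin a) (Fin b) ℝ) (v w : EuclideanSpace ℝ (Fin b)) :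
    mv A (v - w) = mv A v - mv A w :=
  map_sub _ v w

theorem sub_mv (A B : Matrix (Fin a) (Fin b) ℝ) (v : EuclideanSpace ℝ (Fin b)) :
    mv (A - B) v = mv A v - mv B v := by
  simp [mv]

theorem smul_mv (t : ℝ) (A : Matrix (Fin a) (Fin b) ℝ) (v : EuclideanSpace ℝ (Fin b)) :
    mv (t • A) v = t • mv A v := by
  simp [mv]

theorem one_mv (v : EuclideanSpace ℝ (Fin a)) : mv 1 v = v := by
  simp [mv]

theorem mv_mv (A : Matrix (Fin a) (Fin b) ℝ) (B : Matrix (Fin b) (Fin c) ℝ)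
    (v : EuclideanSpace ℝ (Fin c)) : mv A (mv B v) = mv (A * B) v := by
  simp [mv]

theorem _root_.Continuous.mv {X : Type*} [TopologicalSpace X] {A : X → Matrix (Fin a) (Fin b) ℝ}
    {v : X → EuclideanSpace ℝ (Fin b)} (hA : Continuous A) (hv : Continuous v) :
    Continuous fun z => ODEC.mv (A z) (v z) :=
  (PiLp.continuous_toLp 2 _).comp (hA.matrix_mulVec ((PiLp.continuous_ofLp 2 _).comp hv))

end MatVec

section Integral

-- `IntervalIntegrable` needs this structure, which is not found through the local Frobenius norm.
instance {a b : ℕ} : ENormedAddMonoid (Matrix (Fin a) (Fin b) ℝ) :=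
  NormedAddGroup.toENormedAddMonoid

variable {a b c : ℕ} {t₀ t₁ : ℝ}

theorem _root_.LinearMap.intervalIntegral_comp_comm {E F : Type*} [NormedAddCommGroup E]
    [NormedSpace ℝ E] [FiniteDimensional ℝ E] [NormedAddCommGroup F] [NormedSpace ℝ F]
    [CompleteSpace F] (L : E →ₗ[ℝ] F) {f : ℝ → E} (hf : IntervalIntegrable f volume t₀ t₁) :
    ∫ t in t₀..t₁, L (f t) = L (∫ t in t₀..t₁, f t) :=
  (LinearMap.toContinuousLinearMap L).intervalIntegral_comp_comm hf

theorem integral_mv_const {f : ℝ → Matrix (Fin a) (Fin b) ℝ} (v : EuclideanSpace ℝ (Fin b))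
    (hf : IntervalIntegrable f volume t₀ t₁) :
    ∫ t in t₀..t₁, mv (f t) v = mv (∫ t in t₀..t₁, f t) v :=
  ((LinearMap.applyₗ v).comp Matrix.toEuclideanLin.toLinearMap).intervalIntegral_comp_comm hf

theorem integral_const_mv (A : Matrix (Fin a) (Fin b) ℝ) {w : ℝ → EuclideanSpace ℝ (Fin b)}
    (hw : IntervalIntegrable w volume t₀ t₁) :
    ∫ t in t₀..t₁, mv A (w t) = mv A (∫ t in t₀..t₁, w t) :=
  (Matrix.toEuclideanLin A).intervalIntegral_comp_comm hw

theorem integral_transpose {f : ℝ → Matrix (Fin a) (Fin b) ℝ}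
    (hf : IntervalIntegrable f volume t₀ t₁) :
    ∫ t in t₀..t₁, (f t)ᵀ = (∫ t in t₀..t₁, f t)ᵀ :=
  (Matrix.transposeLinearEquiv (Fin a) (Fin b) ℝ ℝ).toLinearMap.intervalIntegral_comp_comm hf

end Integral

theorem eqOn_zero_of_integral_eq_zero {f : ℝ → ℝ} {a b : ℝ} (hab : a < b)
    (hf : ContinuousOn f (Icc a b)) (hnn : ∀ t ∈ Icc a b, 0 ≤ f t)
    (h : ∫ t in a..b, f t = 0) : EqOn f 0 (Icc a b) := by
  have hae : f =ᵐ[volume.restrict (Ioc a b)] 0 := by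
    refine (integral_eq_zero_iff_of_le_of_nonneg_ae hab.le ?_
      (hf.intervalIntegrable_of_Icc hab.le)).mp h
    exact ae_restrict_of_forall_mem measurableSet_Ioc fun t ht => hnn t (Ioc_subset_Icc_self ht)
  rw [Measure.restrict_congr_set Ioc_ae_eq_Icc] at hae
  exact Measure.eqOn_Icc_of_ae_eq volume hab.ne hae hf continuousOn_const

theorem continuous_matrix_inv {X : Type*} [TopologicalSpace X] {n : ℕ}
    {A : X → Matrix (Fin n) (Fin n) ℝ} (hA : Continuous A) (h : ∀ z, IsUnit (A z)) :
    Continuous fun z => (A z)⁻¹ := by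
  refine continuous_iff_continuousAt.2 fun z => (continuousAt_matrix_inv _ ?_).comp hA.continuousAt
  rw [Ring.inverse_eq_inv']
  exact continuousAt_inv₀ ((Matrix.isUnit_iff_isUnit_det _).mp (h z)).ne_zero

theorem _root_.IsCompact.exists_lt_forall_le_of_dist_ge {X : Type*} [PseudoMetricSpace X]
    {K : Set X} (hK : IsCompact K) {f : X → ℝ} (hf : ContinuousOn f K) {x₀ : X}
    (hmin : ∀ x ∈ K, x ≠ x₀ → f x₀ < f x) {ε : ℝ} (hε : 0 < ε) :
    ∃ c, f x₀ < c ∧ ∀ x ∈ K, ε ≤ dist x x₀ → c ≤ f x := by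
  by_cases hne : (K ∩ {x | ε ≤ dist x x₀}).Nonempty
  · have hclosed : IsClosed {x | ε ≤ dist x x₀} :=
      isClosed_le continuous_const (continuous_id.dist continuous_const)
    obtain ⟨x₁, ⟨hx₁K, hx₁ε⟩, hx₁min⟩ :=
      (hK.inter_right hclosed).exists_isMinOn hne (hf.mono inter_subset_left)
    refine ⟨f x₁, hmin x₁ hx₁K ?_, fun x hx hxε => hx₁min ⟨hx, hxε⟩⟩
    rintro rfl
    exact not_le.2 hε (hx₁ε.trans_eq (dist_self _))
  · exact ⟨f x₀ + 1, lt_add_one _, fun x hx hxε => absurd ⟨x, hx, hxε⟩ hne⟩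

section Pair

variable {r q : ℕ}

@[simp] theorem measPart_pair (m : ℝ → EuclideanSpace ℝ (Fin r))
    (u : ℝ → EuclideanSpace ℝ (Fin q)) : measPart (pair m u) = m := by
  funext t
  ext i
  simp [measPart, pair]

@[simp] theorem unmeasPart_pair (m : ℝ → EuclideanSpace ℝ (Fin r))
    (u : ℝ → EuclideanSpace ℝ (Fin q)) : unmeasPart (pair m u) = u := by
  funext t
  ext i
  simp [unmeasPart, pair]

theorem pair_measPart_unmeasPart (x : ℝ → EuclideanSpace ℝ (Fin (r + q))) :
    pair (measPart x) (unmeasPart x) = x := by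
  funext t
  ext i
  refine Fin.addCases (fun j => ?_) (fun j => ?_) i <;> simp [pair, measPart, unmeasPart]

theorem pair_eqOn {m₁ m₂ : ℝ → EuclideanSpace ℝ (Fin r)} {u₁ u₂ : ℝ → EuclideanSpace ℝ (Fin q)}
    {s : Set ℝ} (hm : EqOn m₁ m₂ s) (hu : EqOn u₁ u₂ s) : EqOn (pair m₁ u₁) (pair m₂ u₂) s :=
  fun t ht => by simp only [pair, hm ht, hu ht]

theorem _root_.ContinuousOn.measPart {x : ℝ → EuclideanSpace ℝ (Fin (r + q))} {s : Set ℝ}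
    (hx : ContinuousOn x s) : ContinuousOn (measPart x) s :=
  (EuclideanSpace.equiv (Fin r) ℝ).symm.continuous.comp_continuousOn
    (continuousOn_pi.2 fun _ =>
      ((continuous_apply _).comp (PiLp.continuous_ofLp 2 _)).comp_continuousOn hx)

theorem unmeasPart_eqOn {x₁ x₂ : ℝ → EuclideanSpace ℝ (Fin (r + q))} {s : Set ℝ}
    (h : EqOn x₁ x₂ s) : EqOn (unmeasPart x₁) (unmeasPart x₂) s :=
  fun t ht => by simp only [unmeasPart, h ht]

theorem continuous_uncurry_pair {X : Type*} [TopologicalSpace X]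
    {m : X → ℝ → EuclideanSpace ℝ (Fin r)} {u : X → ℝ → EuclideanSpace ℝ (Fin q)}
    (hm : Continuous (uncurry m)) (hu : Continuous (uncurry u)) :
    Continuous (uncurry fun z => pair (m z) (u z)) := by
  refine (EuclideanSpace.equiv (Fin (r + q)) ℝ).symm.continuous.comp (continuous_pi fun i => ?_)
  refine Fin.addCases (fun j => ?_) (fun j => ?_) i
  · simp only [Fin.append_left]
    exact (continuous_apply j).comp ((EuclideanSpace.equiv (Fin r) ℝ).continuous.comp hm)
  · simp only [Fin.append_right]
    exact (continuous_apply j).comp ((EuclideanSpace.equiv (Fin q) ℝ).continuous.comp hu)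

end Pair

section Extension

variable {T : ℝ} (hT : 0 ≤ T) {E : Type*} [TopologicalSpace E]

theorem ext_of_mem (f : C(Icc (0:ℝ) T, E)) {t : ℝ} (ht : t ∈ Icc 0 T) : ext hT f t = f ⟨t, ht⟩ := by
  simp [ext, projIcc_of_mem hT ht]

theorem continuous_uncurry_ext : Continuous (uncurry fun f : C(Icc (0:ℝ) T, E) => ext hT f) :=
  continuous_eval.comp (continuous_fst.prodMk ((continuous_projIcc (h := hT)).comp continuous_snd))

theorem eq_of_pair_ext_eqOn {r q : ℕ} {m : ℝ → EuclideanSpace ℝ (Fin r)}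
    {u v : C(Icc (0:ℝ) T, EuclideanSpace ℝ (Fin q))} {x : ℝ → EuclideanSpace ℝ (Fin (r + q))}
    (h : EqOn (pair m (ext hT u)) x (Icc 0 T)) (hv : ∀ t : Icc (0:ℝ) T, v t = unmeasPart x t) :
    u = v :=
  ContinuousMap.ext fun t => by
    rw [hv, ← ext_of_mem hT u t.2, ← unmeasPart_eqOn h t.2, unmeasPart_pair]

end Extension

section Congr

variable {n p : ℕ} {g : EuclideanSpace ℝ (Fin n) → Matrix (Fin n) (Fin p) ℝ} {T : ℝ}
  {x₁ x₂ : ℝ → EuclideanSpace ℝ (Fin n)}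

theorem Gm_eqOn (h : EqOn x₁ x₂ (Icc 0 T)) : EqOn (Gm g x₁) (Gm g x₂) (Icc 0 T) := by
  intro t ht
  refine integral_congr fun s hs => ?_
  rw [uIcc_of_le ht.1] at hs
  exact congrArg g (h ⟨hs.1, hs.2.trans ht.2⟩)

theorem Am_congr (hT : 0 ≤ T) (h : EqOn x₁ x₂ (Icc 0 T)) : Am g x₁ T = Am g x₂ T :=
  integral_congr fun _ ht => Gm_eqOn h (uIcc_of_le hT ▸ ht)

theorem Bm_congr (hT : 0 ≤ T) (h : EqOn x₁ x₂ (Icc 0 T)) : Bm g x₁ T = Bm g x₂ T :=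
  integral_congr fun t ht => by
    simp only [Gm_eqOn h (uIcc_of_le hT ▸ ht)]

theorem Cm_congr (hT : 0 ≤ T) (h : EqOn x₁ x₂ (Icc 0 T)) : Cm g x₁ T = Cm g x₂ T := by
  rw [Cm, Cm, Am_congr hT h, Bm_congr hT h]

theorem xiv_congr (hT : 0 ≤ T) (h : EqOn x₁ x₂ (Icc 0 T)) : xiv g x₁ T = xiv g x₂ T := by
  rw [xiv, xiv, Cm_congr hT h, Am_congr hT h, Bm_congr hT h]
  congr 1
  refine integral_congr fun t ht => ?_
  rw [uIcc_of_le hT] at ht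
  simp only [Gm_eqOn h ht, h ht]

theorem thv_congr (hT : 0 ≤ T) (h : EqOn x₁ x₂ (Icc 0 T)) : thv g x₁ T = thv g x₂ T := by
  rw [thv, thv, Bm_congr hT h, xiv_congr hT h]
  congr 1
  refine integral_congr fun t ht => ?_
  rw [uIcc_of_le hT] at ht
  simp only [Gm_eqOn h ht, h ht]

theorem Mf_congr (hT : 0 ≤ T) (h : EqOn x₁ x₂ (Icc 0 T)) : Mf g x₁ T = Mf g x₂ T := by
  rw [Mf, Mf, xiv_congr hT h, thv_congr hT h]
  refine integral_congr fun t ht => ?_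
  rw [uIcc_of_le hT] at ht
  simp only [Gm_eqOn h ht, h ht]

end Congr

section TrueSolution

variable {n p : ℕ} {g : EuclideanSpace ℝ (Fin n) → Matrix (Fin n) (Fin p) ℝ} {T : ℝ}
  {θ : EuclideanSpace ℝ (Fin p)} {ξ : EuclideanSpace ℝ (Fin n)} {y : ℝ → EuclideanSpace ℝ (Fin n)}

theorem continuous_Gm (hg : Continuous g) (hy : Continuous y) : Continuous (Gm g y) :=
  continuous_primitive (fun _ _ => (hg.comp hy).intervalIntegrable _ _) 0

theorem IsSol.congr {x₁ x₂ : ℝ → EuclideanSpace ℝ (Fin n)} (hs : IsSol g T θ ξ x₁)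
    (h : EqOn x₁ x₂ (Icc 0 T)) : IsSol g T θ ξ x₂ :=
  ⟨hs.1.congr h.symm, fun t ht => by rw [← h ht, hs.2 t ht, Gm_eqOn h ht]⟩

theorem IsSol.integral_eq (hs : IsSol g T θ ξ y) (hT : 0 ≤ T) (hg : Continuous g)
    (hy : Continuous y) : ∫ t in (0:ℝ)..T, y t = T • ξ + mv (Am g y T) θ := by
  have hG := continuous_Gm hg hy
  rw [integral_congr fun t ht => hs.2 t (uIcc_of_le hT ▸ ht), integral_add intervalIntegrable_const
    ((hG.mv continuous_const).intervalIntegrable 0 T), intervalIntegral.integral_const,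
    integral_mv_const θ (hG.intervalIntegrable 0 T), sub_zero, Am]

theorem IsSol.integral_transpose_mv (hs : IsSol g T θ ξ y) (hT : 0 ≤ T) (hg : Continuous g)
    (hy : Continuous y) :
    ∫ t in (0:ℝ)..T, mv (Gm g y t)ᵀ (y t) = mv (Am g y T)ᵀ ξ + mv (Bm g y T) θ := by
  have hG := continuous_Gm hg hy
  have hGt : Continuous fun t => (Gm g y t)ᵀ := hG.matrix_transpose
  have hGtG : Continuous fun t => (Gm g y t)ᵀ * Gm g y t := hGt.matrix_mul hG
  have hpt : EqOn (fun t => mv (Gm g y t)ᵀ (y t))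
      (fun t => mv (Gm g y t)ᵀ ξ + mv ((Gm g y t)ᵀ * Gm g y t) θ) (uIcc 0 T) := by
    intro t ht
    simp only [hs.2 t (uIcc_of_le hT ▸ ht), mv_add, mv_mv]
  rw [integral_congr hpt, integral_add ((hGt.mv continuous_const).intervalIntegrable 0 T)
    ((hGtG.mv continuous_const).intervalIntegrable 0 T), integral_mv_const ξ
    (hGt.intervalIntegrable 0 T), integral_mv_const θ (hGtG.intervalIntegrable 0 T),
    integral_transpose (hG.intervalIntegrable 0 T), Am, Bm]

theorem IsSol.xiv_eq (hs : IsSol g T θ ξ y) (hT : 0 ≤ T) (hg : Continuous g) (hy : Continuous y)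
    (hB : IsUnit (Bm g y T)) (hC : IsUnit (Cm g y T)) : xiv g y T = ξ := by
  have hBdet := (Matrix.isUnit_iff_isUnit_det _).mp hB
  have hGt : Continuous fun t => (Gm g y t)ᵀ := (continuous_Gm hg hy).matrix_transpose
  have hpt : ∀ t, mv (1 - Am g y T * (Bm g y T)⁻¹ * (Gm g y t)ᵀ) (y t)
      = y t - mv (Am g y T * (Bm g y T)⁻¹) (mv (Gm g y t)ᵀ (y t)) := fun t => by
    rw [sub_mv, one_mv, mv_mv]
  -- `∫ (1 - A B⁻¹ Gᵀ) y = T ξ + A θ - A B⁻¹ (Aᵀ ξ + B θ) = (T - A B⁻¹ Aᵀ) ξ`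
  have hint : ∫ t in (0:ℝ)..T, mv (1 - Am g y T * (Bm g y T)⁻¹ * (Gm g y t)ᵀ) (y t)
      = mv (Cm g y T) ξ := by
    simp only [hpt]
    rw [integral_sub (hy.intervalIntegrable 0 T)
      ((continuous_const.mv (hGt.mv hy)).intervalIntegrable 0 T),
      integral_const_mv _ ((hGt.mv hy).intervalIntegrable 0 T), hs.integral_eq hT hg hy,
      hs.integral_transpose_mv hT hg hy, mv_add, mv_mv, mv_mv,
      Matrix.nonsing_inv_mul_cancel_right _ _ hBdet, Cm, sub_mv, smul_mv, one_mv]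
    abel
  rw [xiv, hint, mv_mv, Matrix.nonsing_inv_mul _ ((Matrix.isUnit_iff_isUnit_det _).mp hC), one_mv]

theorem IsSol.thv_eq (hs : IsSol g T θ ξ y) (hT : 0 ≤ T) (hg : Continuous g) (hy : Continuous y)
    (hB : IsUnit (Bm g y T)) (hC : IsUnit (Cm g y T)) : thv g y T = θ := by
  have hG := continuous_Gm hg hy
  have hGt : Continuous fun t => (Gm g y t)ᵀ := hG.matrix_transpose
  rw [thv, hs.xiv_eq hT hg hy hB hC]
  simp only [mv_sub]
  rw [integral_sub ((hGt.mv hy).intervalIntegrable 0 T)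
    ((hGt.mv continuous_const).intervalIntegrable 0 T), integral_mv_const ξ
    (hGt.intervalIntegrable 0 T), integral_transpose (hG.intervalIntegrable 0 T),
    hs.integral_transpose_mv hT hg hy, ← Am, add_sub_cancel_left, mv_mv,
    Matrix.nonsing_inv_mul _ ((Matrix.isUnit_iff_isUnit_det _).mp hB), one_mv]

theorem IsSol.Mf_eq_zero (hs : IsSol g T θ ξ y) (hT : 0 ≤ T) (hg : Continuous g)
    (hy : Continuous y) (hB : IsUnit (Bm g y T)) (hC : IsUnit (Cm g y T)) : Mf g y T = 0 := by
  rw [Mf, hs.xiv_eq hT hg hy hB hC, hs.thv_eq hT hg hy hB hC]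
  refine (integral_congr fun t ht => ?_).trans integral_zero
  simp [hs.2 t (uIcc_of_le hT ▸ ht)]

end TrueSolution

section Criterion

variable {n p : ℕ} {g : EuclideanSpace ℝ (Fin n) → Matrix (Fin n) (Fin p) ℝ} {T : ℝ}
  {y : ℝ → EuclideanSpace ℝ (Fin n)}

theorem Mf_nonneg (hT : 0 ≤ T) : 0 ≤ Mf g y T :=
  integral_nonneg hT fun _ _ => sq_nonneg _

theorem isSol_of_Mf_eq_zero (hT : 0 < T) (hg : Continuous g) (hy : Continuous y)
    (h : Mf g y T = 0) : IsSol g T (thv g y T) (xiv g y T) y := by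
  have hres : Continuous fun t => y t - xiv g y T - mv (Gm g y t) (thv g y T) :=
    (hy.sub continuous_const).sub ((continuous_Gm hg hy).mv continuous_const)
  refine ⟨hy.continuousOn, fun t ht => ?_⟩
  have h0 := eqOn_zero_of_integral_eq_zero hT (hres.norm.pow 2).continuousOn
    (fun _ _ => sq_nonneg _) h ht
  rw [Pi.zero_apply, Pi.pow_apply, sq_eq_zero_iff, norm_eq_zero, sub_sub, sub_eq_zero] at h0
  exact h0

end Criterion

section Parametric

variable {n p : ℕ} {g : EuclideanSpace ℝ (Fin n) → Matrix (Fin n) (Fin p) ℝ} {T : ℝ}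
  {X : Type*} [TopologicalSpace X] {y : X → ℝ → EuclideanSpace ℝ (Fin n)}

theorem continuous_uncurry_Gm (hg : Continuous g) (hy : Continuous (uncurry y)) :
    Continuous (uncurry fun z => Gm g (y z)) :=
  continuous_parametric_primitive_of_continuous (f := fun z s => g (y z s)) (hg.comp hy)

theorem continuous_Am (hg : Continuous g) (hy : Continuous (uncurry y)) :
    Continuous fun z => Am g (y z) T :=
  continuous_parametric_intervalIntegral_of_continuous' (continuous_uncurry_Gm hg hy) 0 T

theorem continuous_Bm (hg : Continuous g) (hy : Continuous (uncurry y)) :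
    Continuous fun z => Bm g (y z) T :=
  continuous_parametric_intervalIntegral_of_continuous'
    ((continuous_uncurry_Gm hg hy).matrix_transpose.matrix_mul (continuous_uncurry_Gm hg hy)) 0 T

theorem continuous_Cm (hg : Continuous g) (hy : Continuous (uncurry y))
    (hB : ∀ z, IsUnit (Bm g (y z) T)) : Continuous fun z => Cm g (y z) T :=
  continuous_const.sub (((continuous_Am hg hy).matrix_mul
    (continuous_matrix_inv (continuous_Bm hg hy) hB)).matrix_mul
    (continuous_Am hg hy).matrix_transpose)

theorem continuous_xiv (hg : Continuous g) (hy : Continuous (uncurry y))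
    (hB : ∀ z, IsUnit (Bm g (y z) T)) (hC : ∀ z, IsUnit (Cm g (y z) T)) :
    Continuous fun z => xiv g (y z) T := by
  have hABinv :=
    (continuous_Am (T := T) hg hy).matrix_mul (continuous_matrix_inv (continuous_Bm hg hy) hB)
  refine (continuous_matrix_inv (continuous_Cm hg hy hB) hC).mv
    (continuous_parametric_intervalIntegral_of_continuous' ?_ 0 T)
  exact (continuous_const.sub ((hABinv.comp continuous_fst).matrix_mul
    (continuous_uncurry_Gm hg hy).matrix_transpose)).mv hy

theorem continuous_thv (hg : Continuous g) (hy : Continuous (uncurry y))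
    (hB : ∀ z, IsUnit (Bm g (y z) T)) (hC : ∀ z, IsUnit (Cm g (y z) T)) :
    Continuous fun z => thv g (y z) T :=
  (continuous_matrix_inv (continuous_Bm hg hy) hB).mv
    (continuous_parametric_intervalIntegral_of_continuous'
      ((continuous_uncurry_Gm hg hy).matrix_transpose.mv
        (hy.sub ((continuous_xiv hg hy hB hC).comp continuous_fst))) 0 T)

theorem continuous_Mf (hg : Continuous g) (hy : Continuous (uncurry y))
    (hB : ∀ z, IsUnit (Bm g (y z) T)) (hC : ∀ z, IsUnit (Cm g (y z) T)) :
    Continuous fun z => Mf g (y z) T :=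
  continuous_parametric_intervalIntegral_of_continuous'
    (((hy.sub ((continuous_xiv hg hy hB hC).comp continuous_fst)).sub
      ((continuous_uncurry_Gm hg hy).mv
        ((continuous_thv hg hy hB hC).comp continuous_fst))).norm.pow 2) 0 T

end Parametric

section Identification

variable {r q p : ℕ} {g : EuclideanSpace ℝ (Fin (r + q)) → Matrix (Fin (r + q)) (Fin p) ℝ}
  {T : ℝ}

def SolutionsUnique (g : EuclideanSpace ℝ (Fin (r + q)) → Matrix (Fin (r + q)) (Fin p) ℝ)
    (T : ℝ) : Prop :=
  ∀ (θ : EuclideanSpace ℝ (Fin p)) (ξ : EuclideanSpace ℝ (Fin (r + q)))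
    (x₁ x₂ : ℝ → EuclideanSpace ℝ (Fin (r + q))),
    IsSol g T θ ξ x₁ → IsSol g T θ ξ x₂ → ∀ t ∈ Icc (0:ℝ) T, x₁ t = x₂ t

def IdentifiableFromMeasPart
    (g : EuclideanSpace ℝ (Fin (r + q)) → Matrix (Fin (r + q)) (Fin p) ℝ) (T : ℝ) : Prop :=
  ∀ (θ₁ : EuclideanSpace ℝ (Fin p)) (ξ₁ : EuclideanSpace ℝ (Fin (r + q)))
    (θ₂ : EuclideanSpace ℝ (Fin p)) (ξ₂ : EuclideanSpace ℝ (Fin (r + q)))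
    (x₁ x₂ : ℝ → EuclideanSpace ℝ (Fin (r + q))),
    IsSol g T θ₁ ξ₁ x₁ → IsSol g T θ₂ ξ₂ x₂ →
    (∀ t ∈ Icc (0:ℝ) T, measPart x₁ t = measPart x₂ t) → (θ₁, ξ₁) = (θ₂, ξ₂)

theorem eqOn_of_Mf_eq_zero (hT : 0 < T) (hg : Continuous g) (huniq : SolutionsUnique g T)
    (hident : IdentifiableFromMeasPart g T) {θ : EuclideanSpace ℝ (Fin p)}
    {ξ : EuclideanSpace ℝ (Fin (r + q))} {x y : ℝ → EuclideanSpace ℝ (Fin (r + q))}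
    (hx : IsSol g T θ ξ x) (hy : Continuous y) (hm : EqOn (measPart y) (measPart x) (Icc 0 T))
    (h : Mf g y T = 0) : EqOn y x (Icc 0 T) := by
  have hsol := isSol_of_Mf_eq_zero hT hg hy h
  obtain ⟨hθ, hξ⟩ := Prod.mk.inj (hident _ _ _ _ y x hsol hx hm)
  rw [hθ, hξ] at hsol
  exact huniq θ ξ y x hsol hx

end Identification

end ODEC

open ODEC

theorem stmt10_general {r q p : ℕ} {T : ℝ} (hT : 0 < T)
    (g : EuclideanSpace ℝ (Fin (r + q)) → Matrix (Fin (r + q)) (Fin p) ℝ)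
    (hg : Continuous g)
    -- (b) uniqueness of solutions of the integral equation
    (huniq : ∀ (θ' : EuclideanSpace ℝ (Fin p)) (ξ' : EuclideanSpace ℝ (Fin (r + q)))
      (x₁ x₂ : ℝ → EuclideanSpace ℝ (Fin (r + q))),
      IsSol g T θ' ξ' x₁ → IsSol g T θ' ξ' x₂ → ∀ t ∈ Set.Icc (0:ℝ) T, x₁ t = x₂ t)
    -- the true solution
    (θ : EuclideanSpace ℝ (Fin p)) (ξ : EuclideanSpace ℝ (Fin (r + q)))
    (x : ℝ → EuclideanSpace ℝ (Fin (r + q))) (hsol : IsSol g T θ ξ x)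
    -- (c) identifiability from the measured part
    (hident : ∀ (θ' : EuclideanSpace ℝ (Fin p)) (ξ' : EuclideanSpace ℝ (Fin (r + q)))
      (θ'' : EuclideanSpace ℝ (Fin p)) (ξ'' : EuclideanSpace ℝ (Fin (r + q)))
      (x₁ x₂ : ℝ → EuclideanSpace ℝ (Fin (r + q))),
      IsSol g T θ' ξ' x₁ → IsSol g T θ'' ξ'' x₂ →
      (∀ t ∈ Set.Icc (0:ℝ) T, measPart x₁ t = measPart x₂ t) → (θ', ξ') = (θ'', ξ''))
    -- (d) the compact set `U` containing `u*`, and invertibility on `U`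
    (U : Set C(Set.Icc (0:ℝ) T, EuclideanSpace ℝ (Fin q))) (hU : IsCompact U)
    (ustar : C(Set.Icc (0:ℝ) T, EuclideanSpace ℝ (Fin q))) (hmem : ustar ∈ U)
    (hustar : ∀ t : Set.Icc (0:ℝ) T, ustar t = unmeasPart x ↑t)
    (hinv : ∀ u ∈ U, IsUnit (Bm g (pair (measPart x) (ext hT.le u)) T) ∧
      IsUnit (Cm g (pair (measPart x) (ext hT.le u)) T)) :
    Mf g (pair (measPart x) (ext hT.le ustar)) T = 0 ∧
    (∀ u ∈ U, u ≠ ustar →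
      Mf g (pair (measPart x) (ext hT.le ustar)) T <
        Mf g (pair (measPart x) (ext hT.le u)) T) ∧
    (∀ ε > (0:ℝ), ∃ c : ℝ,
      Mf g (pair (measPart x) (ext hT.le ustar)) T < c ∧
      ∀ u ∈ U, ε ≤ dist u ustar → c ≤ Mf g (pair (measPart x) (ext hT.le u)) T) := by
  -- `measPart x` is only continuous on `[0,T]`; replace it by its constant extension.
  set m := fun t => measPart x (Set.projIcc 0 T hT.le t)
  have hm : Set.EqOn m (measPart x) (Set.Icc 0 T) := fun t ht => by
    simp only [m, Set.projIcc_of_mem hT.le ht]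
  set Y := fun u : C(Set.Icc (0:ℝ) T, EuclideanSpace ℝ (Fin q)) => pair m (ext hT.le u)
  have hY u : Set.EqOn (pair (measPart x) (ext hT.le u)) (Y u) (Set.Icc 0 T) :=
    pair_eqOn hm.symm (Set.eqOn_refl _ _)
  have hmc : Continuous m := hsol.1.measPart.comp_continuous
    (continuous_subtype_val.comp continuous_projIcc) fun t => (Set.projIcc 0 T hT.le t).2
  have hYc : Continuous (Function.uncurry fun u : U => Y u) :=
    continuous_uncurry_pair (hmc.comp continuous_snd)
      ((continuous_uncurry_ext hT.le).comp (continuous_subtype_val.prodMap continuous_id))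
  have hYu (u : U) : Continuous (Y u) := hYc.comp (Continuous.prodMk_right u)
  have hB (u : U) : IsUnit (Bm g (Y u) T) := Bm_congr hT.le (hY u) ▸ (hinv u u.2).1
  have hC (u : U) : IsUnit (Cm g (Y u) T) := Cm_congr hT.le (hY u) ▸ (hinv u u.2).2
  have hYstar : Set.EqOn x (Y ustar) (Set.Icc 0 T) := pair_measPart_unmeasPart x ▸
    pair_eqOn hm.symm fun t ht => by rw [ext_of_mem hT.le ustar ht, hustar]
  have h0 : Mf g (Y ustar) T = 0 :=
    (hsol.congr hYstar).Mf_eq_zero hT.le hg (hYu ⟨_, hmem⟩) (hB ⟨_, hmem⟩) (hC ⟨_, hmem⟩)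
  have hpos : ∀ u ∈ U, u ≠ ustar → Mf g (Y ustar) T < Mf g (Y u) T := by
    intro u hu hne
    refine h0 ▸ (Mf_nonneg hT.le).lt_of_ne' fun h => hne ?_
    exact eq_of_pair_ext_eqOn hT.le (eqOn_of_Mf_eq_zero hT hg huniq hident hsol (hYu ⟨u, hu⟩)
      (by rw [measPart_pair]; exact hm) h) hustar
  simp only [Mf_congr hT.le (hY _)]
  exact ⟨h0, hpos, fun ε hε => hU.exists_lt_forall_le_of_dist_ge
    (continuousOn_iff_continuous_domRestrict (f := fun u => Mf g (Y u) T).2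
      (continuous_Mf hg hYc hB hC)) hpos hε⟩

/-- Identification: under uniqueness of solutions of the integral equation
and identifiability from the measured components, `M(u*) = 0`, `u*` is the unique minimizer
of the limit criterion `M` on `U`, and the minimum is well separated:
for every `ε > 0`, `M(u*) < inf {M(u) : u ∈ U, ‖u − u*‖∞ ≥ ε}`. -/
theorem stmt10 {r q p : ℕ} (hr : 0 < r) (hq : 0 < q) (hp : 0 < p) {T : ℝ} (hT : 0 < T)
    (g : EuclideanSpace ℝ (Fin (r + q)) → Matrix (Fin (r + q)) (Fin p) ℝ)
    (hg : Continuous g)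
    -- (b) uniqueness of solutions of the integral equation
    (huniq : ∀ (θ' : EuclideanSpace ℝ (Fin p)) (ξ' : EuclideanSpace ℝ (Fin (r + q)))
      (x₁ x₂ : ℝ → EuclideanSpace ℝ (Fin (r + q))),
      IsSol g T θ' ξ' x₁ → IsSol g T θ' ξ' x₂ → ∀ t ∈ Set.Icc (0:ℝ) T, x₁ t = x₂ t)
    -- the true solution
    (θ : EuclideanSpace ℝ (Fin p)) (ξ : EuclideanSpace ℝ (Fin (r + q)))
    (x : ℝ → EuclideanSpace ℝ (Fin (r + q))) (hsol : IsSol g T θ ξ x)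
    -- (c) identifiability from the measured part
    (hident : ∀ (θ' : EuclideanSpace ℝ (Fin p)) (ξ' : EuclideanSpace ℝ (Fin (r + q)))
      (θ'' : EuclideanSpace ℝ (Fin p)) (ξ'' : EuclideanSpace ℝ (Fin (r + q)))
      (x₁ x₂ : ℝ → EuclideanSpace ℝ (Fin (r + q))),
      IsSol g T θ' ξ' x₁ → IsSol g T θ'' ξ'' x₂ →
      (∀ t ∈ Set.Icc (0:ℝ) T, measPart x₁ t = measPart x₂ t) → (θ', ξ') = (θ'', ξ''))
    -- (d) the compact set `U` containing `u*`, and invertibility on `U`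
    (U : Set C(Set.Icc (0:ℝ) T, EuclideanSpace ℝ (Fin q))) (hU : IsCompact U)
    (ustar : C(Set.Icc (0:ℝ) T, EuclideanSpace ℝ (Fin q))) (hmem : ustar ∈ U)
    (hustar : ∀ t : Set.Icc (0:ℝ) T, ustar t = unmeasPart x ↑t)
    (hinv : ∀ u ∈ U, IsUnit (Bm g (pair (measPart x) (ext hT.le u)) T) ∧
      IsUnit (Cm g (pair (measPart x) (ext hT.le u)) T)) :
    Mf g (pair (measPart x) (ext hT.le ustar)) T = 0 ∧
    (∀ u ∈ U, u ≠ ustar →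
      Mf g (pair (measPart x) (ext hT.le ustar)) T <
        Mf g (pair (measPart x) (ext hT.le u)) T) ∧
    (∀ ε > (0:ℝ), ∃ c : ℝ,
      Mf g (pair (measPart x) (ext hT.le ustar)) T < c ∧
      ∀ u ∈ U, ε ≤ dist u ustar → c ≤ Mf g (pair (measPart x) (ext hT.le u)) T) :=
  stmt10_general hT g hg huniq θ ξ x hsol hident U hU ustar hmem hustar hinv
end
end
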